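/- arXiv:2304.00303 — 6 statements merged into one kernel-verified Lean document; each statement's English description precedes it below -/
import Mathlib

section
/- Let R be a local ring and let C^1, …, C^r be a family of primitive vectors of R^n in echelon form, generating the submodule M. Let J = {j ∈ {1,…,n} | j ∉ {piv(C^1), …, piv(C^r)}} and let P be the R-submodule of R^n generated by the standard basis vectors e_j with j ∈ J. Then R^n is the internal direct sum of M and P (M ⊓ P = ⊥ and M ⊔ P = ⊤). -/
/-!
Adjoining to the `C k` the basis vectors `e j` with `j` not a pivot gives a family whose pivots
run through every index exactly once. Sorted by pivot, they form a matrix that is lower triangular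
modulo the maximal ideal with unit diagonal, so its determinant is a unit and the vectors are a
basis of `Rⁿ`; `M` and `P` are spanned by complementary parts of this basis.
-/

open IsLocalRing Matrix Submodule

section

variable {R : Type*} [CommRing R]

def IsPivot {η : Type*} [LT η] (v : η → R) (i : η) : Prop :=
  IsUnit (v i) ∧ ∀ j < i, ¬ IsUnit (v j)

theorem isPivot_single {η : Type*} [Preorder η] [DecidableEq η] [Nontrivial R] (i : η) :
    IsPivot (Pi.single i (1 : R)) i :=
  ⟨by simp, fun j hj => by simp [Pi.single_eq_of_ne hj.ne]⟩

theorem Matrix.isUnit_det_of_isUnit_diag_of_nonunit_above [IsLocalRing R]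
    {η : Type*} [Fintype η] [LinearOrder η] (A : Matrix η η R)
    (hdiag : ∀ i, IsUnit (A i i)) (habove : ∀ i j, i < j → ¬ IsUnit (A i j)) :
    IsUnit A.det := by
  have hlower : (A.map (residue R)).IsLowerTriangular := fun i j hij =>
    (residue_eq_zero_iff _).2 ((mem_maximalIdeal _).2 (habove i j hij))
  rw [← isUnit_map_iff (residue R), RingHom.map_det, RingHom.mapMatrix_apply,
    det_of_isLowerTriangular _ hlower]
  exact IsUnit.prod_univ_iff.2 fun i => (hdiag i).map (residue R)

theorem linearIndependent_and_span_eq_top_of_isPivot [IsLocalRing R]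
    {ι η : Type*} [Fintype η] [LinearOrder η] (v : ι → η → R) (e : ι ≃ η)
    (hv : ∀ i, IsPivot (v i) (e i)) :
    LinearIndependent R v ∧ span R (Set.range v) = ⊤ := by
  have hbasis : IsUnit ((Pi.basisFun R η).det (v ∘ e.symm)) := by
    refine isUnit_det_of_isUnit_diag_of_nonunit_above _ (fun i => ?_) fun i j hij => ?_
    · simpa [Module.Basis.toMatrix_apply] using (hv (e.symm i)).1
    · simpa [Module.Basis.toMatrix_apply] using (hv (e.symm j)).2 i (by simpa using hij)
  rw [← Module.Basis.is_basis_iff_det, linearIndependent_equiv, Set.range_comp,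
    e.symm.range_eq_univ, Set.image_univ] at hbasis
  exact hbasis

theorem isCompl_span_range_of_sumElim {ι ι' M : Type*} [AddCommGroup M] [Module R M]
    (u : ι → M) (w : ι' → M) (hli : LinearIndependent R (Sum.elim u w))
    (hspan : span R (Set.range (Sum.elim u w)) = ⊤) :
    IsCompl (span R (Set.range u)) (span R (Set.range w)) :=
  ⟨(linearIndependent_sum.1 hli).2.2, by
    rw [codisjoint_iff, ← span_union, ← Set.Sum.elim_range, hspan]⟩

end

/-- Lemma 1.3: over a local ring, the submodule `M` generated by a family of
primitive vectors in echelon form has as a direct complement the free module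
generated by the standard basis vectors whose index is not a pivot index. -/
theorem echelon_family_direct_summand
    {R : Type*} [CommRing R] [IsLocalRing R] {n r : ℕ}
    (C : Fin r → (Fin n → R)) (p : Fin r → Fin n)
    (hpiv_unit : ∀ k, IsUnit (C k (p k)))
    (hpiv_min : ∀ k, ∀ i : Fin n, i < p k → ¬ IsUnit (C k i))
    (hdistinct : Function.Injective p)
    (M P : Submodule R (Fin n → R))
    (hM : M = Submodule.span R (Set.range C))
    (hP : P = Submodule.span R
      ((fun j : Fin n => (Pi.single j (1 : R) : Fin n → R)) '' (Set.range p)ᶜ)) :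
    M ⊓ P = ⊥ ∧ M ⊔ P = ⊤ := by
  classical
  let e : Fin r ⊕ ↥(Set.range p)ᶜ ≃ Fin n :=
    ((Equiv.ofInjective p hdistinct).sumCongr (Equiv.refl _)).trans
      (Equiv.Set.sumCompl (Set.range p))
  let single : ↥(Set.range p)ᶜ → Fin n → R := fun j => Pi.single j.1 1
  obtain ⟨hli, hspan⟩ := linearIndependent_and_span_eq_top_of_isPivot
    (Sum.elim C single) e (by
      rintro (k | j)
      · exact ⟨hpiv_unit k, hpiv_min k⟩
      · exact isPivot_single (j : Fin n))
  have hcompl := isCompl_span_range_of_sumElim C single hli hspan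
  rw [Set.image_eq_range] at hP
  subst hM hP
  exact ⟨hcompl.inf_eq_bot, hcompl.sup_eq_top⟩
end

section
/- Let R be a local ring and let C^1, …, C^r be a family of primitive vectors of R^n in echelon form, generating the submodule M of R^n. Then the set of pivot indices {piv(C^1), …, piv(C^r)} depends only on M: an index j ∈ {1,…,n} belongs to {piv(C^1), …, piv(C^r)} if and only if there exists a primitive vector U ∈ M with piv(U) = j. -/
/-- In a local ring, if a finite sum is a unit, then some summand is a unit. -/
lemma exists_isUnit_of_isUnit_sum {R : Type*} [CommRing R] [IsLocalRing R]
    {ι : Type*} (s : Finset ι) (f : ι → R) (h : IsUnit (∑ i ∈ s, f i)) :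
    ∃ i ∈ s, IsUnit (f i) := by
  by_contra hc
  push_neg at hc
  have : (∑ i ∈ s, f i) ∈ IsLocalRing.maximalIdeal R :=
    Ideal.sum_mem _ fun i hi => (IsLocalRing.mem_maximalIdeal _).2 (hc i hi)
  exact (IsLocalRing.mem_maximalIdeal _).1 this h

/-- Lemma 1.3, second part: the set of pivot indices of an echelon family only
depends on the generated module `M`: an index `j` is a pivot index of the
family if and only if `M` contains a primitive vector with pivot index `j`. -/
theorem echelon_family_pivots_depend_only_on_module
    {R : Type*} [CommRing R] [IsLocalRing R] {n r : ℕ}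
    (C : Fin r → (Fin n → R)) (p : Fin r → Fin n)
    (hpiv_unit : ∀ k, IsUnit (C k (p k)))
    (hpiv_min : ∀ k, ∀ i : Fin n, i < p k → ¬ IsUnit (C k i))
    (hdistinct : Function.Injective p)
    (M : Submodule R (Fin n → R)) (hM : M = Submodule.span R (Set.range C))
    (j : Fin n) :
    j ∈ Set.range p ↔
      ∃ U ∈ M, IsUnit (U j) ∧ ∀ i : Fin n, i < j → ¬ IsUnit (U i) := by
  classical
  subst hM
  constructor
  · rintro ⟨k, rfl⟩
    exact ⟨C k, Submodule.subset_span ⟨k, rfl⟩, hpiv_unit k, hpiv_min k⟩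
  · rintro ⟨U, hU, hUj, hUmin⟩
    rw [Finsupp.mem_span_range_iff_exists_finsupp] at hU
    obtain ⟨a, ha⟩ := hU
    have hval : ∀ i : Fin n, U i = ∑ k, a k * C k i := by
      intro i
      rw [← ha]
      rw [Finsupp.sum_fintype _ _ (by simp)]
      simp [Finset.sum_apply]
    -- the set of k with a k a unit is nonempty
    have hUj' := hUj
    rw [hval j] at hUj'
    obtain ⟨k1, -, hk1⟩ := exists_isUnit_of_isUnit_sum _ _ hUj'
    have hak1 : IsUnit (a k1) := isUnit_of_mul_isUnit_left hk1
    have hCk1 : IsUnit (C k1 j) := isUnit_of_mul_isUnit_right hk1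
    set T : Finset (Fin r) := Finset.univ.filter (fun k => IsUnit (a k)) with hT
    have hTne : T.Nonempty := ⟨k1, by simp [hT, hak1]⟩
    obtain ⟨k0, hk0T, hk0min⟩ := T.exists_min_image p hTne
    have hak0 : IsUnit (a k0) := (Finset.mem_filter.1 hk0T).2
    -- U (p k0) is a unit
    have hUpk0 : IsUnit (U (p k0)) := by
      by_contra hcon
      have hrest : (∑ k ∈ Finset.univ.erase k0, a k * C k (p k0))
          ∈ IsLocalRing.maximalIdeal R := by
        refine Ideal.sum_mem _ fun k hk => (IsLocalRing.mem_maximalIdeal _).2 ?_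
        intro hu
        have hak : IsUnit (a k) := isUnit_of_mul_isUnit_left hu
        have hCk : IsUnit (C k (p k0)) := isUnit_of_mul_isUnit_right hu
        have hkT : k ∈ T := by simp [hT, hak]
        have hle : p k0 ≤ p k := hk0min k hkT
        have hne : p k0 ≠ p k := fun h => (Finset.mem_erase.1 hk).1 (hdistinct h.symm)
        exact hpiv_min k (p k0) (lt_of_le_of_ne hle hne) hCk
      have hsum : U (p k0) = a k0 * C k0 (p k0) +
          ∑ k ∈ Finset.univ.erase k0, a k * C k (p k0) := by
        rw [hval (p k0), ← Finset.add_sum_erase _ _ (Finset.mem_univ k0)]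
      have hmem : U (p k0) ∈ IsLocalRing.maximalIdeal R :=
        (IsLocalRing.mem_maximalIdeal _).2 hcon
      have : a k0 * C k0 (p k0) ∈ IsLocalRing.maximalIdeal R := by
        have := Ideal.sub_mem _ hmem hrest
        rwa [hsum, add_sub_cancel_right] at this
      exact (IsLocalRing.mem_maximalIdeal _).1 this (hak0.mul (hpiv_unit k0))
    -- conclude j = p k0
    have h1 : j ≤ p k0 := le_of_not_gt fun h => hUmin (p k0) h hUpk0
    have h2 : p k1 ≤ j := le_of_not_gt fun h => hpiv_min k1 j h hCk1
    have h3 : p k0 ≤ p k1 := hk0min k1 (by simp [hT, hak1])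
    exact ⟨k0, le_antisymm (h3.trans h2) h1⟩
end

section
/- Let R be a local integral domain and let C^1, …, C^r be a family of primitive vectors of R^n in echelon form, generating the submodule M of R^n. Then M is saturated in R^n: for every x ∈ R^n and every nonzero a ∈ R, if a • x ∈ M then x ∈ M. -/
open Matrix Finsupp


/-- Over a local integral domain, the submodule of `R^n` generated by a family
of primitive vectors in echelon form is saturated in `R^n`. -/
theorem echelon_family_span_saturated
    {R : Type*} [CommRing R] [IsDomain R] [IsLocalRing R] {n r : ℕ}
    (C : Fin r → (Fin n → R)) (p : Fin r → Fin n)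
    (hpiv_unit : ∀ k, IsUnit (C k (p k)))
    (hpiv_min : ∀ k, ∀ i : Fin n, i < p k → ¬ IsUnit (C k i))
    (hdistinct : Function.Injective p)
    (M : Submodule R (Fin n → R)) (hM : M = Submodule.span R (Set.range C))
    (x : Fin n → R) (a : R) (ha : a ≠ 0) (hax : a • x ∈ M) : x ∈ M := by
  subst hM
  -- the pivot matrix
  set A : Matrix (Fin r) (Fin r) R := fun k l => C k (p l) with hAdef
  -- its reduction mod the maximal ideal
  set φ := IsLocalRing.residue R
  set Abar : Matrix (Fin r) (Fin r) (IsLocalRing.ResidueField R) := A.map φ with hAbar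
  -- sort the pivots
  set σ : Equiv.Perm (Fin r) := Tuple.sort p with hσ
  have hmono : StrictMono (p ∘ σ) :=
    (Tuple.monotone_sort p).strictMono_of_injective (hdistinct.comp σ.injective)
  have hzero : ∀ k l : Fin r, p l < p k → φ (C k (p l)) = 0 := by
    intro k l h
    exact (IsLocalRing.residue_eq_zero_iff _).2 (hpiv_min k (p l) h)
  have hdiag : ∀ k : Fin r, φ (C k (p k)) ≠ 0 := fun k =>
    ((hpiv_unit k).map φ).ne_zero
  -- determinant of Abar is nonzero
  have hdetbar : Abar.det ≠ 0 := by
    have htri : (Abar.submatrix σ σ).BlockTriangular id := by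
      intro i j hij
      exact hzero (σ i) (σ j) (hmono hij)
    have hdet : (Abar.submatrix σ σ).det = ∏ i, Abar (σ i) (σ i) :=
      Matrix.det_of_upperTriangular htri
    rw [← Matrix.det_submatrix_equiv_self σ Abar, hdet]
    exact Finset.prod_ne_zero_iff.2 fun i _ => hdiag (σ i)
  -- hence det A is a unit (local ring)
  have hdetA : IsUnit A.det := by
    by_contra h
    apply hdetbar
    have hm : A.det ∈ IsLocalRing.maximalIdeal R := h
    have h0 : φ A.det = 0 := (IsLocalRing.residue_eq_zero_iff _).2 hm
    rw [hAbar, show A.map ⇑φ = φ.mapMatrix A from rfl, ← RingHom.map_det, h0]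
  -- get the coefficients of a • x
  rw [Submodule.mem_span_range_iff_exists_fun] at hax ⊢
  obtain ⟨b, hb⟩ := hax
  -- b ᵥ* A = fun l => a * x (p l)
  have hbA : b ᵥ* A = fun l => a * x (p l) := by
    funext l
    have := congrFun hb (p l)
    simpa [Matrix.vecMul, dotProduct, Finset.sum_apply] using this
  set c : Fin r → R := (fun l => x (p l)) ᵥ* A⁻¹ with hc
  have hbc : ∀ k, b k = a * c k := by
    have : b ᵥ* (A * A⁻¹) = (fun l => a * x (p l)) ᵥ* A⁻¹ := by
      rw [← Matrix.vecMul_vecMul, hbA]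
    rw [Matrix.mul_nonsing_inv A hdetA, Matrix.vecMul_one] at this
    intro k
    rw [this, hc]
    simp only [Matrix.vecMul, dotProduct]
    rw [Finset.mul_sum]
    exact Finset.sum_congr rfl fun l _ => by ring
  refine ⟨c, ?_⟩
  have key : a • (∑ k, c k • C k) = a • x := by
    rw [← hb, Finset.smul_sum]
    exact Finset.sum_congr rfl fun k _ => by rw [hbc k, smul_smul]
  exact smul_right_injective (Fin n → R) ha key
end

section
/- Let V be a valuation domain and M a finitely generated V-submodule of V^n. Then there exists a finite family (C^1, …, C^r) of primitive vectors of V^n in strict echelon form whose V-span equals the V-saturation Sat_{V,V^n}(M) of M in V^n. -/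
private lemma vr_exists_dvd_all {V : Type*} [CommRing V] [IsDomain V] [ValuationRing V]
    {ι : Type*} (s : Finset ι) (hs : s.Nonempty) (f : ι → V) :
    ∃ j ∈ s, ∀ i ∈ s, f j ∣ f i := by
  classical
  induction s using Finset.induction_on with
  | empty => exact absurd hs (by simp)
  | @insert a t ha ih =>
    rcases t.eq_empty_or_nonempty with rfl | ht
    · exact ⟨a, by simp⟩
    · obtain ⟨j, hj, hdvd⟩ := ih ht
      rcases ValuationRing.dvd_total (f j) (f a) with h | h
      · refine ⟨j, Finset.mem_insert_of_mem hj, fun i hi => ?_⟩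
        rcases Finset.mem_insert.mp hi with rfl | hi
        · exact h
        · exact hdvd i hi
      · refine ⟨a, Finset.mem_insert_self a t, fun i hi => ?_⟩
        rcases Finset.mem_insert.mp hi with rfl | hi
        · exact dvd_rfl
        · exact h.trans (hdvd i hi)

private lemma echelon_aux {V : Type*} [CommRing V] [IsDomain V] [ValuationRing V] {n : ℕ}
    (m : ℕ) : ∀ (S : Submodule V (Fin n → V)),
    (∀ (a : V) (x : Fin n → V), a ≠ 0 → a • x ∈ S → x ∈ S) →
    ∀ (s : Finset (Fin n)), s.card ≤ m →
    (∀ x ∈ S, ∀ i ∉ s, x i = 0) →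
    ∃ (r : ℕ) (C : Fin r → (Fin n → V)) (p : Fin r → Fin n),
      (∀ k, IsUnit (C k (p k))) ∧
      (∀ k, ∀ i : Fin n, i < p k → ¬ IsUnit (C k i)) ∧
      Function.Injective p ∧
      (∀ j k, j < k → C k (p j) = 0) ∧
      Submodule.span V (Set.range C) = S := by
  classical
  induction m with
  | zero =>
    intro S hsat s hcard hsupp
    refine ⟨0, Fin.elim0, Fin.elim0, fun k => k.elim0, fun k => k.elim0,
      fun a => a.elim0, fun j => j.elim0, ?_⟩
    rw [Set.range_eq_empty, Submodule.span_empty]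
    symm
    rw [Submodule.eq_bot_iff]
    intro x hx
    funext i
    exact hsupp x hx i (by simp [Finset.card_eq_zero.mp (Nat.le_zero.mp hcard)])
  | succ m ih =>
    intro S hsat s hcard hsupp
    by_cases hS : ∀ x ∈ S, x = (0 : Fin n → V)
    · refine ⟨0, Fin.elim0, Fin.elim0, fun k => k.elim0, fun k => k.elim0,
        fun a => a.elim0, fun j => j.elim0, ?_⟩
      rw [Set.range_eq_empty, Submodule.span_empty]
      symm
      rw [Submodule.eq_bot_iff]
      exact hS
    · push_neg at hS
      obtain ⟨x, hxS, hx0⟩ := hS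
      -- find a coordinate of minimal valuation
      have hne : (Finset.univ.filter fun i => x i ≠ 0).Nonempty := by
        by_contra h
        apply hx0
        funext i
        by_contra hxi
        exact h ⟨i, Finset.mem_filter.mpr ⟨Finset.mem_univ i, hxi⟩⟩
      obtain ⟨j0, hj0mem, hj0dvd⟩ := vr_exists_dvd_all _ hne x
      have hxj0 : x j0 ≠ 0 := (Finset.mem_filter.mp hj0mem).2
      have hdvd : ∀ i, x j0 ∣ x i := by
        intro i
        by_cases hi : x i = 0
        · rw [hi]; exact dvd_zero _
        · exact hj0dvd i (Finset.mem_filter.mpr ⟨Finset.mem_univ i, hi⟩)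
      -- the primitive vector y with x = x j0 • y
      set y : Fin n → V := fun i => (hdvd i).choose with hy_def
      have hy_spec : ∀ i, x i = x j0 * y i := fun i => (hdvd i).choose_spec
      have hxy : x = x j0 • y := by
        funext i
        simpa [Pi.smul_apply, smul_eq_mul] using hy_spec i
      have hyS : y ∈ S := hsat (x j0) y hxj0 (hxy ▸ hxS)
      have hyj0 : y j0 = 1 := by
        have := hy_spec j0
        have h1 : x j0 * 1 = x j0 * y j0 := by rw [mul_one]; exact this
        exact (mul_left_cancel₀ hxj0 h1).symm
      -- pivot
      have hUne : (Finset.univ.filter fun i => IsUnit (y i)).Nonempty :=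
        ⟨j0, Finset.mem_filter.mpr ⟨Finset.mem_univ j0, hyj0 ▸ isUnit_one⟩⟩
      set p0 : Fin n := (Finset.univ.filter fun i => IsUnit (y i)).min' hUne with hp0_def
      have hp0unit : IsUnit (y p0) :=
        (Finset.mem_filter.mp (Finset.min'_mem _ hUne)).2
      have hp0min : ∀ i : Fin n, i < p0 → ¬ IsUnit (y i) := by
        intro i hi hu
        exact absurd (Finset.min'_le _ i (Finset.mem_filter.mpr ⟨Finset.mem_univ i, hu⟩))
          (not_le.mpr hi)
      have hp0s : p0 ∈ s := by
        by_contra h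
        exact hp0unit.ne_zero (hsupp y hyS p0 h)
      -- the smaller module
      set S' : Submodule V (Fin n → V) := S ⊓ LinearMap.ker (LinearMap.proj p0) with hS'_def
      have hS'mem : ∀ z : Fin n → V, z ∈ S' ↔ z ∈ S ∧ z p0 = 0 := by
        intro z
        simp [hS'_def, Submodule.mem_inf, LinearMap.mem_ker]
      have hsat' : ∀ (a : V) (z : Fin n → V), a ≠ 0 → a • z ∈ S' → z ∈ S' := by
        intro a z ha hz
        rw [hS'mem] at hz ⊢
        refine ⟨hsat a z ha hz.1, ?_⟩
        have := hz.2
        rw [Pi.smul_apply, smul_eq_mul] at this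
        exact (mul_eq_zero.mp this).resolve_left ha
      have hsupp' : ∀ z ∈ S', ∀ i ∉ s.erase p0, z i = 0 := by
        intro z hz i hi
        rw [hS'mem] at hz
        rw [Finset.mem_erase] at hi
        push_neg at hi
        by_cases hip : i = p0
        · rw [hip]; exact hz.2
        · exact hsupp z hz.1 i (hi hip)
      have hcard' : (s.erase p0).card ≤ m := by
        have := Finset.card_erase_of_mem hp0s
        omega
      obtain ⟨r', C', p', h1', h2', h3', h4', h5'⟩ := ih S' hsat' (s.erase p0) hcard' hsupp'
      have hC'S' : ∀ k, C' k ∈ S' := by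
        intro k
        rw [← h5']
        exact Submodule.subset_span (Set.mem_range_self k)
      have hC'p0 : ∀ k, C' k p0 = 0 := fun k => ((hS'mem _).mp (hC'S' k)).2
      -- assemble
      refine ⟨r' + 1, Fin.cons y C', Fin.cons p0 p', ?_, ?_, ?_, ?_, ?_⟩
      · intro k
        induction k using Fin.cases with
        | zero => simpa using hp0unit
        | succ k => simpa using h1' k
      · intro k i hik
        induction k using Fin.cases with
        | zero => exact fun hu => hp0min i (by simpa using hik) (by simpa using hu)
        | succ k =>
          simp only [Fin.cons_succ] at hik ⊢
          exact h2' k i hik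
      · intro a b hab
        induction a using Fin.cases with
        | zero =>
          induction b using Fin.cases with
          | zero => rfl
          | succ b =>
            exfalso
            simp only [Fin.cons_zero, Fin.cons_succ] at hab
            have := h1' b
            rw [← hab, hC'p0 b] at this
            exact this.ne_zero rfl
        | succ a =>
          induction b using Fin.cases with
          | zero =>
            exfalso
            simp only [Fin.cons_zero, Fin.cons_succ] at hab
            have := h1' a
            rw [hab, hC'p0 a] at this
            exact this.ne_zero rfl
          | succ b =>
            simp only [Fin.cons_succ] at hab
            rw [h3' hab]
      · intro j k hjk
        induction j using Fin.cases with
        | zero =>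
          induction k using Fin.cases with
          | zero => exact absurd hjk (lt_irrefl _)
          | succ k => simpa using hC'p0 k
        | succ j =>
          induction k using Fin.cases with
          | zero => exact absurd hjk (by simp [Fin.lt_def])
          | succ k =>
            simp only [Fin.cons_succ]
            exact h4' j k (by simpa [Fin.succ_lt_succ_iff] using hjk)
      · rw [Fin.range_cons]
        apply le_antisymm
        · rw [Submodule.span_le]
          intro z hz
          rcases hz with rfl | hz
          · exact hyS
          · obtain ⟨k, rfl⟩ := hz
            exact ((hS'mem _).mp (hC'S' k)).1
        · intro w hw
          obtain ⟨u, hu⟩ := hp0unit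
          set c : V := w p0 * ↑u⁻¹ with hc_def
          have hzc : w = c • y + (w - c • y) := by ring_nf
          have hz1 : c • y ∈ Submodule.span V (insert y (Set.range C')) :=
            Submodule.smul_mem _ c (Submodule.subset_span (Set.mem_insert y _))
          have hzp0 : (w - c • y) p0 = 0 := by
            simp only [Pi.sub_apply, Pi.smul_apply, smul_eq_mul, hc_def, ← hu]
            rw [mul_assoc]
            simp
          have hzS : w - c • y ∈ S := Submodule.sub_mem _ hw (Submodule.smul_mem _ _ hyS)
          have hz2 : w - c • y ∈ Submodule.span V (Set.range C') := by
            rw [h5', hS'mem]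
            exact ⟨hzS, hzp0⟩
          have hz2' : w - c • y ∈ Submodule.span V (insert y (Set.range C')) :=
            Submodule.span_mono (Set.subset_insert _ _) hz2
          rw [hzc]
          exact Submodule.add_mem _ hz1 hz2'

/-- Theorem 1.5: over a valuation domain `V`, the `V`-saturation of a finitely
generated submodule of `V^n` is the span of a finite family of primitive
vectors in strict echelon form. -/
theorem saturation_has_strict_echelon_basis
    {V : Type*} [CommRing V] [IsDomain V] [ValuationRing V] {n : ℕ}
    (M : Submodule V (Fin n → V)) (hM : M.FG) :
    ∃ (r : ℕ) (C : Fin r → (Fin n → V)) (p : Fin r → Fin n),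
      (∀ k, IsUnit (C k (p k))) ∧
      (∀ k, ∀ i : Fin n, i < p k → ¬ IsUnit (C k i)) ∧
      Function.Injective p ∧
      (∀ j k : Fin r, j < k → C k (p j) = 0) ∧
      (∀ x : Fin n → V,
        x ∈ Submodule.span V (Set.range C) ↔ ∃ a : V, a ≠ 0 ∧ a • x ∈ M) := by
  classical
  set S : Submodule V (Fin n → V) :=
    { carrier := {x | ∃ a : V, a ≠ 0 ∧ a • x ∈ M}
      add_mem' := by
        rintro x y ⟨a, ha, hax⟩ ⟨b, hb, hbx⟩
        refine ⟨a * b, mul_ne_zero ha hb, ?_⟩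
        rw [smul_add]
        refine Submodule.add_mem _ ?_ ?_
        · rw [mul_comm, mul_smul]; exact M.smul_mem _ hax
        · rw [mul_smul]; exact M.smul_mem _ hbx
      zero_mem' := ⟨1, one_ne_zero, by simpa using M.zero_mem⟩
      smul_mem' := by
        rintro c x ⟨a, ha, hax⟩
        exact ⟨a, ha, by rw [smul_comm]; exact M.smul_mem c hax⟩ } with hS_def
  have hsat : ∀ (a : V) (x : Fin n → V), a ≠ 0 → a • x ∈ S → x ∈ S := by
    rintro a x ha ⟨b, hb, hbax⟩
    refine ⟨b * a, mul_ne_zero hb ha, ?_⟩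
    rw [mul_smul]; exact hbax
  obtain ⟨r, C, p, h1, h2, h3, h4, h5⟩ :=
    echelon_aux (V := V) (n := n) n S hsat Finset.univ (by simp) (by simp)
  exact ⟨r, C, p, h1, h2, h3, h4, fun x => by rw [h5]; exact Iff.rfl⟩
end

section
/- Let V be a valuation domain and M a finitely generated V-submodule of V^n. Then the V-saturation Sat_{V,V^n}(M) of M in V^n is a free V-module of finite rank, and it is a direct summand of V^n: there exists a V-submodule P of V^n with Sat_{V,V^n}(M) ⊓ P = ⊥ and Sat_{V,V^n}(M) ⊔ P = ⊤. -/
/-!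
The saturation of `M` is the preimage of the torsion submodule of `V^n ⧸ M`, so `V^n ⧸ Sat(M)`
is finitely generated and torsion-free. A valuation domain is a local Bézout domain; over a
Bézout domain torsion-free modules are flat, and finite flat modules over a local ring are free.
Hence `V^n ⧸ Sat(M)` is free, the projection onto it splits, and `Sat(M)` is a direct summand
of `V^n`: finitely generated as a quotient of `V^n`, torsion-free as a submodule, hence free.
-/

theorem Module.free_of_isTorsionFree_of_valuationRing {V Q : Type*} [CommRing V] [IsDomain V]
    [ValuationRing V] [AddCommGroup Q] [Module V Q] [Module.Finite V Q]
    [Module.IsTorsionFree V Q] : Module.Free V Q :=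
  have : Module.Flat V Q := Module.Flat.flat_iff_torsion_eq_bot_of_isBezout.mpr
    (Submodule.isTorsionFree_iff_torsion_eq_bot.mp inferInstance)
  Module.free_of_flat_of_isLocalRing

theorem LinearMap.isCompl_ker_range_of_comp_eq_id {R M N : Type*} [Ring R] [AddCommGroup M]
    [Module R M] [AddCommGroup N] [Module R N] {f : M →ₗ[R] N} {g : N →ₗ[R] M}
    (hfg : f ∘ₗ g = LinearMap.id) : IsCompl (ker f) (range g) := by
  have hidem : IsIdempotentElem (g ∘ₗ f) := by
    rw [IsIdempotentElem, Module.End.mul_eq_comp, comp_assoc, ← comp_assoc f, hfg, id_comp]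
  have hinv : Function.LeftInverse f g := fun y => congr($hfg y)
  have hcompl := LinearMap.IsIdempotentElem.isCompl hidem
  rw [range_comp_of_range_eq_top _ (range_eq_top.mpr hinv.surjective),
    ker_comp_of_ker_eq_bot _ (ker_eq_bot.mpr hinv.injective)] at hcompl
  exact hcompl.symm

namespace Submodule

theorem exists_isCompl_of_projective_quotient {R N : Type*} [Ring R] [AddCommGroup N]
    [Module R N] (S : Submodule R N) [Module.Projective R (N ⧸ S)] :
    ∃ P : Submodule R N, IsCompl S P := by
  obtain ⟨σ, hσ⟩ := Module.projective_lifting_property S.mkQ LinearMap.id S.mkQ_surjective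
  exact ⟨_, by simpa using LinearMap.isCompl_ker_range_of_comp_eq_id hσ⟩

variable {R N : Type*} [CommRing R] [AddCommGroup N] [Module R N]

def saturation (M : Submodule R N) : Submodule R N :=
  (torsion R (N ⧸ M)).comap M.mkQ

variable [IsDomain R]

theorem mem_saturation_iff {M : Submodule R N} {x : N} :
    x ∈ M.saturation ↔ ∃ a : R, a ≠ 0 ∧ a • x ∈ M := by
  simp only [saturation, mem_comap, mkQ_apply, mem_torsion_iff, ← Quotient.mk_smul,
    Quotient.mk_eq_zero]
  constructor
  · rintro ⟨a, ha⟩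
    exact ⟨a, nonZeroDivisors.coe_ne_zero a, ha⟩
  · rintro ⟨a, ha, hax⟩
    exact ⟨⟨a, mem_nonZeroDivisors_of_ne_zero ha⟩, hax⟩

instance isTorsionFree_quotient_saturation (M : Submodule R N) :
    Module.IsTorsionFree R (N ⧸ M.saturation) := by
  refine Module.IsTorsionFree.of_smul_eq_zero fun c q hcq => ?_
  obtain ⟨x, rfl⟩ := Quotient.mk_surjective _ q
  rw [← Quotient.mk_smul, Quotient.mk_eq_zero, mem_saturation_iff] at hcq
  rw [Quotient.mk_eq_zero, mem_saturation_iff, or_iff_not_imp_left]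
  obtain ⟨a, ha, hacx⟩ := hcq
  exact fun hc => ⟨a * c, mul_ne_zero ha hc, by rwa [mul_smul]⟩

end Submodule

theorem saturation_free_and_summand_general
    {V : Type*} [CommRing V] [IsDomain V] [ValuationRing V] {n : ℕ}
    (M : Submodule V (Fin n → V)) :
    ∃ S P : Submodule V (Fin n → V),
      (∀ x : Fin n → V, x ∈ S ↔ ∃ a : V, a ≠ 0 ∧ a • x ∈ M) ∧
      Module.Free V S ∧ Module.Finite V S ∧
      S ⊓ P = ⊥ ∧ S ⊔ P = ⊤ := by
  have : Module.Free V ((Fin n → V) ⧸ M.saturation) :=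
    Module.free_of_isTorsionFree_of_valuationRing
  obtain ⟨P, hSP⟩ := M.saturation.exists_isCompl_of_projective_quotient
  have : Module.Finite V M.saturation :=
    .of_surjective _ (Submodule.projectionOnto_surjective hSP)
  exact ⟨M.saturation, P, fun _ => Submodule.mem_saturation_iff,
    Module.free_of_isTorsionFree_of_valuationRing, inferInstance, hSP.inf_eq_bot, hSP.sup_eq_top⟩

/-- Over a valuation domain `V`, the `V`-saturation of a finitely generated
submodule of `V^n` is a finite free `V`-module and a direct summand of `V^n`. -/
theorem saturation_free_and_summand
    {V : Type*} [CommRing V] [IsDomain V] [ValuationRing V] {n : ℕ}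
    (M : Submodule V (Fin n → V)) (hM : M.FG) :
    ∃ S P : Submodule V (Fin n → V),
      (∀ x : Fin n → V, x ∈ S ↔ ∃ a : V, a ≠ 0 ∧ a • x ∈ M) ∧
      Module.Free V S ∧ Module.Finite V S ∧
      S ⊓ P = ⊥ ∧ S ⊔ P = ⊤ :=
  saturation_free_and_summand_general M
end

section
/- Let V be a valuation domain with fraction field K, let u_1, …, u_n ∈ V[X]^k, and let s^1, …, s^m ∈ V[X]^n be vectors whose images in K[X]^n generate, as a K[X]-module, the syzygy module {f ∈ K[X]^n | Σ_{j=1}^n f_j • u_j = 0 in K[X]^k} of (u_1, …, u_n) over K[X] (where u_j is viewed in K[X]^k). Then the syzygy module {f ∈ V[X]^n | Σ_{j=1}^n f_j • u_j = 0 in V[X]^k} of (u_1, …, u_n) over V[X] is equal to the V-saturation in V[X]^n of the V[X]-submodule generated by s^1, …, s^m. -/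
open Polynomial

-- common denominator for a finite family of polynomials over K
theorem aux_denom {V : Type*} [CommRing V] [IsDomain V]
    (K : Type*) [Field K] [Algebra V K] [IsFractionRing V K]
    {m : ℕ} (g : Fin m → Polynomial K) :
    ∃ (a : V) (h : Fin m → Polynomial V), a ≠ 0 ∧
      ∀ j, (h j).map (algebraMap V K) = Polynomial.C (algebraMap V K a) * g j := by
  choose b hb using fun j => IsLocalization.integerNormalization_map_to_map (nonZeroDivisors V) (g j)
  refine ⟨∏ j, (b j : V), fun j => (Polynomial.C (∏ i ∈ Finset.univ.erase j, (b i : V))) *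
      IsLocalization.integerNormalization (nonZeroDivisors V) (g j), ?_, ?_⟩
  · exact fun h => by
      have := Finset.prod_eq_zero_iff.mp h
      obtain ⟨i, -, hi⟩ := this
      exact nonZeroDivisors.coe_ne_zero (b i) hi
  · intro j
    rw [Polynomial.map_mul, hb j, Polynomial.map_C, Algebra.smul_def,
      Polynomial.algebraMap_apply, ← mul_assoc, ← Polynomial.C_mul, ← map_mul]
    congr 3
    rw [mul_comm]
    exact Finset.mul_prod_erase Finset.univ (fun i => (b i : V)) (Finset.mem_univ j)

/-- Theorem 3.1: if `s^1, …, s^m ∈ V[X]^n` generate over `K[X]` the syzygy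
module of `(u_1, …, u_n)` (for `K` the fraction field of the valuation domain
`V`), then the syzygy module of `(u_1, …, u_n)` over `V[X]` equals the
`V`-saturation in `V[X]^n` of the `V[X]`-module generated by the `s^j`. -/
theorem syzygies_eq_saturation_of_span
    {V : Type*} [CommRing V] [IsDomain V] [ValuationRing V]
    (K : Type*) [Field K] [Algebra V K] [IsFractionRing V K]
    {n k m : ℕ}
    (u : Fin n → (Fin k → Polynomial V))
    (s : Fin m → (Fin n → Polynomial V))
    (hgen : ∀ f : Fin n → Polynomial K,
      (∑ j, f j • (fun i => (u j i).map (algebraMap V K)) = 0) ↔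
        f ∈ Submodule.span (Polynomial K)
          (Set.range fun j => fun i => (s j i).map (algebraMap V K))) :
    ∀ f : Fin n → Polynomial V,
      (∑ j, f j • u j = 0) ↔
        ∃ a : V, a ≠ 0 ∧
          (Polynomial.C a) • f ∈ Submodule.span (Polynomial V) (Set.range s) := by
  have hinj : Function.Injective (Polynomial.map (algebraMap V K)) :=
    Polynomial.map_injective _ (IsFractionRing.injective V K)
  intro f
  constructor
  · intro hf
    -- the image of f is in the K[X]-span
    have h1 : (fun j => (f j).map (algebraMap V K)) ∈ Submodule.span (Polynomial K)
        (Set.range fun j => fun i => (s j i).map (algebraMap V K)) := by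
      rw [← hgen]
      funext i
      have := congrFun hf i
      simp only [Finset.sum_apply, Pi.smul_apply, smul_eq_mul, Pi.zero_apply] at this ⊢
      have : Polynomial.map (algebraMap V K) (∑ j, f j * u j i) = 0 := by rw [this]; simp
      simpa [Polynomial.map_sum] using this
    rw [Submodule.mem_span_range_iff_exists_fun] at h1
    obtain ⟨g, hg⟩ := h1
    obtain ⟨a, h, ha, hh⟩ := aux_denom (V := V) K g
    refine ⟨a, ha, ?_⟩
    have key : Polynomial.C a • f = ∑ j, h j • s j := by
      funext i
      apply hinj
      have := congrFun hg i
      simp only [Finset.sum_apply, Pi.smul_apply, smul_eq_mul] at this ⊢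
      rw [Polynomial.map_mul, Polynomial.map_C, Polynomial.map_sum]
      rw [← this, Finset.mul_sum]
      apply Finset.sum_congr rfl
      intro j _
      rw [Polynomial.map_mul, hh j]
      ring
    rw [key]
    refine Submodule.sum_smul_mem _ _ fun j _ => Submodule.subset_span ?_
    exact ⟨j, rfl⟩
  · rintro ⟨a, ha, hmem⟩
    -- image of C a • f is in the K[X]-span
    have h1 : (fun i => ((Polynomial.C a • f) i).map (algebraMap V K)) ∈
        Submodule.span (Polynomial K)
          (Set.range fun j => fun i => (s j i).map (algebraMap V K)) := by
      refine Submodule.span_induction (p := fun x _ => (fun i => (x i).map (algebraMap V K)) ∈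
        Submodule.span (Polynomial K)
          (Set.range fun j => fun i => (s j i).map (algebraMap V K))) ?_ ?_ ?_ ?_ hmem
      · rintro x ⟨j, rfl⟩
        beta_reduce
        exact Submodule.subset_span ⟨j, rfl⟩
      · beta_reduce
        have : (fun i => ((0 : Fin n → Polynomial V) i).map (algebraMap V K)) =
            (0 : Fin n → Polynomial K) := by funext i; simp
        rw [this]; exact Submodule.zero_mem _
      · intro x y _ _ hx hy
        beta_reduce
        beta_reduce at hx hy
        have : (fun i => ((x + y) i).map (algebraMap V K)) =
            (fun i => (x i).map (algebraMap V K)) + (fun i => (y i).map (algebraMap V K)) := by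
          funext i; simp [Polynomial.map_add]
        rw [this]; exact Submodule.add_mem _ hx hy
      · intro p x _ hx
        beta_reduce
        beta_reduce at hx
        have : (fun i => ((p • x) i).map (algebraMap V K)) =
            (p.map (algebraMap V K)) • (fun i => (x i).map (algebraMap V K)) := by
          funext i; simp [Polynomial.map_mul]
        rw [this]; exact Submodule.smul_mem _ _ hx
    rw [← hgen] at h1
    funext i
    have := congrFun h1 i
    simp only [Finset.sum_apply, Pi.smul_apply, smul_eq_mul, Pi.zero_apply] at this
    have haK : Polynomial.C (algebraMap V K a) ≠ 0 := by
      simp only [ne_eq, Polynomial.C_eq_zero]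
      exact fun h => ha (IsFractionRing.injective V K (by simpa using h))
    have h2 : Polynomial.C (algebraMap V K a) * ∑ j, (f j).map (algebraMap V K) *
        (u j i).map (algebraMap V K) = 0 := by
      rw [Finset.mul_sum, ← this]
      apply Finset.sum_congr rfl
      intro j _
      simp only [Pi.smul_apply, smul_eq_mul, Polynomial.map_mul, Polynomial.map_C]
      ring
    have h3 : ∑ j, (f j).map (algebraMap V K) * (u j i).map (algebraMap V K) = 0 :=
      (mul_eq_zero.mp h2).resolve_left haK
    apply hinj
    simp only [Finset.sum_apply, Pi.smul_apply, smul_eq_mul, Pi.zero_apply]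
    rw [Polynomial.map_sum]
    simpa [Polynomial.map_mul] using h3
end
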